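/- (Coercivity of the gain estimate in the gain-scaling.) Fix d ∈ (−1,1), β > 0 and α₁, α₂, ã > 0. For L > 0 define G(L) := inf {γ ∈ ℝ : γ > 0 and Ĵ(z₁,z₂,ν,δ; γ, L) < 0 for all (z₁,z₂,ν,δ) ∈ ℝ⁴∖{(0,0,0,0)}}. Then there exist constants c₁ > 0 and c₂ > 0, independent of L, such that for every L > 0: G(L) ≥ c₁·L and G(L) ≥ c₂·L^{−(1−d)/(1+d)}. In particular G(L) → ∞ both as L → ∞ and as L → 0⁺. -/
import Mathlib


/-- Sign-preserving power `⌊x⌉^p = sign(x)·|x|^p`. -/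
noncomputable def spow (x p : ℝ) : ℝ := Real.sign x * |x| ^ p

/-- The value function `Ĵ(z₁,z₂,ν,δ; γ, L)` of the homogeneous differential
dissipation inequality for the second-order homogeneous differentiator. -/
noncomputable def Jhat (d β α1 α2 a L γ z1 z2 ν δ : ℝ) : ℝ :=
  a * (-α1 * (spow z1 (1/(1-d)) - z2) * (spow (z1 + ν) (1/(1-d)) - z2)
        + (-z1 + (1 + β) * spow z2 (1 - d)) *
            (-(α2 / α1) * spow (z1 + ν) ((1+d)/(1-d)) + δ / (L ^ 2 * α1)))
    + α1 ^ 2 * z2 ^ 2 - (γ / L) ^ 2 * (|ν| ^ (2/(1-d)) + |δ| ^ (2/(1+d)))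

open scoped ENNReal

/-- The set of certified gains `γ` for gain-scaling `L`. -/
def gainSet (d β α1 α2 a L : ℝ) : Set ℝ :=
  {γ : ℝ | 0 < γ ∧ ∀ z1 z2 ν δ : ℝ,
    (z1, z2, ν, δ) ≠ ((0:ℝ), (0:ℝ), (0:ℝ), (0:ℝ)) →
    Jhat d β α1 α2 a L γ z1 z2 ν δ < 0}

/-- `G(L)`: the infimum of certified gains (`⊤` if none exists). -/
noncomputable def Gest (d β α1 α2 a L : ℝ) : ℝ≥0∞ :=
  ⨅ γ ∈ gainSet d β α1 α2 a L, ENNReal.ofReal γ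

/-- Coercivity of the gain estimate in the gain-scaling: `G(L) ≥ c₁·L` and
`G(L) ≥ c₂·L^{-(1-d)/(1+d)}` for `L`-independent constants `c₁, c₂ > 0`; in
particular `G(L) → ∞` as `L → ∞` and as `L → 0⁺`. -/
theorem stmt17 (d β α1 α2 a : ℝ) (hd : d ∈ Set.Ioo (-1:ℝ) 1) (hβ : 0 < β)
    (hα1 : 0 < α1) (hα2 : 0 < α2) (ha : 0 < a) :
    ∃ c1 c2 : ℝ, 0 < c1 ∧ 0 < c2 ∧
      (∀ L > (0:ℝ),
        ENNReal.ofReal (c1 * L) ≤ Gest d β α1 α2 a L ∧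
        ENNReal.ofReal (c2 * L ^ (-(1-d)/(1+d))) ≤ Gest d β α1 α2 a L) ∧
      Filter.Tendsto (fun L => Gest d β α1 α2 a L) Filter.atTop (nhds ⊤) ∧
      Filter.Tendsto (fun L => Gest d β α1 α2 a L)
        (nhdsWithin 0 (Set.Ioi (0:ℝ))) (nhds ⊤) := by
  obtain ⟨hd1, hd2⟩ := hd
  have h1d : (0:ℝ) < 1 + d := by linarith
  have h1d' : (0:ℝ) < 1 - d := by linarith
  set c : ℝ := α1 ^ 2 / (1 + β) with hcdef
  have hc : 0 < c := by positivity
  set c2 : ℝ := α1 * c ^ (-(1/(1+d))) with hc2def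
  have hc2 : 0 < c2 := mul_pos hα1 (Real.rpow_pos_of_pos hc _)
  -- the two test-point lower bounds on any certified gain
  have main : ∀ L : ℝ, 0 < L → ∀ γ ∈ gainSet d β α1 α2 a L,
      α1 * L ≤ γ ∧ c2 * L ^ (-(1-d)/(1+d)) ≤ γ := by
    intro L hL γ hγ
    obtain ⟨hγ0, hJ⟩ := hγ
    have hL' : L ≠ 0 := ne_of_gt hL
    have hα1' : α1 ≠ 0 := ne_of_gt hα1
    constructor
    · -- test point (1,1,-1,0)
      have hval : Jhat d β α1 α2 a L γ 1 1 (-1) 0 = α1 ^ 2 - (γ / L) ^ 2 := by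
        have h2 : (2:ℝ)/(1+d) ≠ 0 := div_ne_zero two_ne_zero (ne_of_gt h1d)
        simp [Jhat, spow, Real.zero_rpow h2]
      have h := hJ 1 1 (-1) 0 (by simp)
      rw [hval] at h
      have h' : (α1 * L) ^ 2 < γ ^ 2 := by
        rw [div_pow] at h
        have hL2 : (0:ℝ) < L ^ 2 := by positivity
        rw [mul_pow]
        exact (lt_div_iff₀ hL2).mp (by linarith)
      exact le_of_lt (lt_of_pow_lt_pow_left₀ 2 hγ0.le h')
    · -- test point (0,1,0,c*L^2)
      have h2 : (2:ℝ)/(1-d) ≠ 0 := div_ne_zero two_ne_zero (ne_of_gt h1d')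
      have hcl : |c * L^2| = c * L^2 := abs_of_pos (by positivity)
      have hβ' : (1+β) ≠ 0 := by positivity
      have hval : Jhat d β α1 α2 a L γ 0 1 0 (c * L^2)
          = α1 ^ 2 - (γ/L)^2 * (c*L^2) ^ (2/(1+d)) := by
        simp only [Jhat, spow, Real.sign_zero, Real.sign_one, abs_zero, abs_one,
          Real.one_rpow, Real.zero_rpow h2, add_zero, zero_add, hcl]
        generalize (c*L^2) ^ (2/(1+d)) = X
        rw [hcdef]
        field_simp
        ring
      have h := hJ 0 1 0 (c * L^2) (by simp)
      rw [hval] at h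
      -- key algebraic identity
      have key : (c2 * L ^ (-(1-d)/(1+d)))^2 * ((c*L^2) ^ ((2:ℝ)/(1+d)) / L^2) = α1 ^ 2 := by
        have e1 : (c * L^2) ^ ((2:ℝ)/(1+d)) = c ^ ((2:ℝ)/(1+d)) * L ^ ((4:ℝ)/(1+d)) := by
          rw [Real.mul_rpow hc.le (sq_nonneg L), ← Real.rpow_natCast L 2,
            ← Real.rpow_mul hL.le]
          congr 1; push_cast; ring
        have e2 : (L ^ (-(1-d)/(1+d)))^2 = L ^ ((-2*(1-d))/(1+d)) := by
          rw [← Real.rpow_natCast (L ^ (-(1-d)/(1+d))) 2, ← Real.rpow_mul hL.le]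
          congr 1; push_cast; ring
        have e3 : (c ^ (-(1/(1+d))))^2 = c ^ (-((2:ℝ)/(1+d))) := by
          rw [← Real.rpow_natCast (c ^ (-(1/(1+d)))) 2, ← Real.rpow_mul hc.le]
          congr 1; push_cast; ring
        have e4 : L ^ ((-2*(1-d))/(1+d)) * L ^ ((4:ℝ)/(1+d)) = L ^ (2:ℕ) := by
          rw [← Real.rpow_add hL, ← Real.rpow_natCast L 2]
          congr 1; push_cast; field_simp; ring
        have e5 : c ^ (-((2:ℝ)/(1+d))) * c ^ ((2:ℝ)/(1+d)) = 1 := by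
          rw [← Real.rpow_add hc]; norm_num
        have hL2 : (L:ℝ)^2 ≠ 0 := by positivity
        calc (c2 * L ^ (-(1-d)/(1+d)))^2 * ((c*L^2) ^ ((2:ℝ)/(1+d)) / L^2)
            = α1^2 * ((c ^ (-((2:ℝ)/(1+d))) * c ^ ((2:ℝ)/(1+d))) *
                ((L ^ ((-2*(1-d))/(1+d)) * L ^ ((4:ℝ)/(1+d))) / L^2)) := by
              rw [hc2def, e1, mul_pow, mul_pow, e2, e3]; ring
          _ = α1 ^ 2 := by rw [e4, e5]; field_simp
      have hA : (0:ℝ) < (c*L^2) ^ ((2:ℝ)/(1+d)) / L^2 := by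
        have := Real.rpow_pos_of_pos (show (0:ℝ) < c * L^2 by positivity) ((2:ℝ)/(1+d))
        positivity
      have h' : (c2 * L ^ (-(1-d)/(1+d))) ^ 2 < γ ^ 2 := by
        have hineq : α1 ^ 2 < γ ^ 2 * ((c*L^2) ^ ((2:ℝ)/(1+d)) / L^2) := by
          rw [div_pow] at h
          calc α1 ^ 2 < γ^2 / L^2 * (c*L^2) ^ ((2:ℝ)/(1+d)) := by linarith
            _ = γ ^ 2 * ((c*L^2) ^ ((2:ℝ)/(1+d)) / L^2) := by ring
        rw [← key] at hineq
        exact lt_of_mul_lt_mul_right (by linarith) hA.le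
      have hpos : 0 ≤ c2 * L ^ (-(1-d)/(1+d)) := by
        have := Real.rpow_pos_of_pos hL (-(1-d)/(1+d))
        positivity
      exact le_of_lt (lt_of_pow_lt_pow_left₀ 2 hγ0.le h')
  have gmain : ∀ L : ℝ, 0 < L →
      ENNReal.ofReal (α1 * L) ≤ Gest d β α1 α2 a L ∧
      ENNReal.ofReal (c2 * L ^ (-(1-d)/(1+d))) ≤ Gest d β α1 α2 a L := by
    intro L hL
    constructor
    · exact le_iInf₂ fun γ hγ => ENNReal.ofReal_le_ofReal (main L hL γ hγ).1
    · exact le_iInf₂ fun γ hγ => ENNReal.ofReal_le_ofReal (main L hL γ hγ).2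
  refine ⟨α1, c2, hα1, hc2, fun L hL => gmain L hL, ?_, ?_⟩
  · -- L → ∞
    refine tendsto_nhds_top_mono (f := fun L => ENNReal.ofReal (α1 * L))
      (ENNReal.tendsto_ofReal_atTop.comp
        (Filter.Tendsto.const_mul_atTop hα1 Filter.tendsto_id)) ?_
    filter_upwards [Filter.eventually_gt_atTop (0:ℝ)] with L hL
    exact (gmain L hL).1
  · -- L → 0⁺
    have hmain : Filter.Tendsto (fun L : ℝ => ENNReal.ofReal (c2 * L ^ (-(1-d)/(1+d))))
        (nhdsWithin 0 (Set.Ioi (0:ℝ))) (nhds ⊤) := by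
      have hr : (0:ℝ) < (1-d)/(1+d) := div_pos h1d' h1d
      have h1 : Filter.Tendsto (fun L : ℝ => L ^ (-(1-d)/(1+d)))
          (nhdsWithin 0 (Set.Ioi (0:ℝ))) Filter.atTop := by
        have h2 := (tendsto_rpow_atTop hr).comp tendsto_inv_nhdsGT_zero
        refine h2.congr' ?_
        filter_upwards [self_mem_nhdsWithin] with x hx
        have hx' : (0:ℝ) < x := hx
        rw [Function.comp_apply, Real.inv_rpow hx'.le, ← Real.rpow_neg hx'.le, neg_div]
      exact ENNReal.tendsto_ofReal_atTop.comp (h1.const_mul_atTop hc2)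
    refine tendsto_nhds_top_mono hmain ?_
    filter_upwards [self_mem_nhdsWithin] with L hL
    exact (gmain L hL).2
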